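/- arXiv:2209.12669 — 2 statements merged into one kernel-verified Lean document; each statement's English description precedes it below -/
import Mathlib

section
/- Cost-bound decomposition for the cost-carrying partiality monad: if bind_L e f = step^c(η_L b), then there merely exist c₁, c₂ : C and a : A with e = step^{c₁}(η_L a), f(a) = step^{c₂}(η_L b), and c = c₁ + c₂. -/
open OmegaCompletePartialOrder

/-- The cost-carrying partiality monad `L A := (C × A)⊥`. -/
abbrev L (C A : Type*) : Type _ := Part (C × A)

/-- The unit `η_L a = η (0, a)`. -/
def etaL {C A : Type*} [AddMonoid C] (a : A) : L C A := Part.some (0, a)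

/-- Cost-threading bind:
`bind_L e f = do (c₁,a) ← e; (c₂,b) ← f a; η (c₁+c₂, b)`. -/
def bindL {C A B : Type*} [AddMonoid C] (e : L C A) (f : A → L C B) : L C B :=
  e.bind fun p => (f p.2).bind fun q => Part.some (p.1 + q.1, q.2)

/-- The cost effect `step^c e = do (c',a) ← e; η (c + c', a)`. -/
def stepL {C A : Type*} [AddMonoid C] (c : C) (e : L C A) : L C A :=
  e.bind fun p => Part.some (c + p.1, p.2)

/-- The iteration functional `ITER(g)(f)(a) = bind_L (g a) [η_L; f]`. -/
def ITER {C A B : Type*} [AddMonoid C] (g : A → L C (B ⊕ A))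
    (f : A → L C B) (a : A) : L C B :=
  bindL (g a) (Sum.elim etaL f)

/-- Cost-bound decomposition: if `bind_L e f = step^c (η_L b)`, then there merely
exist `c₁ c₂ : C` and `a : A` with `e = step^{c₁} (η_L a)`,
`f a = step^{c₂} (η_L b)`, and `c = c₁ + c₂`. -/
theorem bindL_inv {C A B : Type} [AddMonoid C] (e : L C A) (f : A → L C B)
    (c : C) (b : B) (h : bindL e f = stepL c (etaL b)) :
    ∃ (c₁ c₂ : C) (a : A),
      e = stepL c₁ (etaL a) ∧ f a = stepL c₂ (etaL b) ∧ c = c₁ + c₂ := by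
  have hrhs : stepL c (etaL b) = Part.some (c, b) := by
    simp [stepL, etaL, Part.bind_some]
  rw [hrhs] at h
  have hmem : (c, b) ∈ bindL e f := h ▸ Part.mem_some _
  simp only [bindL, Part.mem_bind_iff, Part.mem_some_iff] at hmem
  obtain ⟨p, hp, q, hq, heq⟩ := hmem
  obtain ⟨rfl, rfl⟩ : c = p.1 + q.1 ∧ b = q.2 := Prod.mk.injEq .. ▸ heq
  refine ⟨p.1, q.1, p.2, ?_, ?_, rfl⟩
  · rw [Part.eq_some_iff.mpr hp]
    simp [stepL, etaL, Part.bind_some]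
  · rw [Part.eq_some_iff.mpr hq]
    simp [stepL, etaL, Part.bind_some]
end

section
/- Compactness of iteration: define seq(g, 0, a) = η_L(inr a) and seq(g, k+1, a) = bind_L (g a) [η_L ∘ inl; seq(g, k)]. If iter(g)(a) = step^c(η_L b), then there merely exists k : ℕ such that seq(g, k, a) = step^c(η_L (inl b)). -/
open OmegaCompletePartialOrder

/-- Unbounded iteration as the least fixed point of the iteration functional. -/
def iter {C A B : Type} [AddMonoid C] (g : A → L C (B ⊕ A)) : A → L C B :=
  Part.fix (ITER g)

/-- Finite prefixes of an iterative computation. -/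
def seq {C A B : Type} [AddMonoid C] (g : A → L C (B ⊕ A)) :
    ℕ → A → L C (B ⊕ A)
  | 0, a => etaL (Sum.inr a)
  | k + 1, a => bindL (g a) (Sum.elim (fun b => etaL (Sum.inl b)) (seq g k))

/-- `ITER g` as a monotone map. -/
def ITERhom {C A B : Type} [AddMonoid C] (g : A → L C (B ⊕ A)) :
    (A → L C B) →o (A → L C B) where
  toFun := ITER g
  monotone' := by
    intro f₁ f₂ hf a
    intro x hx
    simp only [ITER, bindL, Part.mem_bind_iff] at hx ⊢
    obtain ⟨p, hp, q, hq, hx⟩ := hx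
    refine ⟨p, hp, q, ?_, hx⟩
    cases hs : p.2 with
    | inl b => rw [hs] at hq; exact hq
    | inr a' => rw [hs] at hq; exact hf a' q hq

theorem approx_to_seq {C A B : Type} [AddMonoid C] (g : A → L C (B ⊕ A)) :
    ∀ (k : ℕ) (a : A) (c : C) (b : B),
      (c, b) ∈ Part.Fix.approx (ITER g) k a → (c, Sum.inl b) ∈ seq g k a := by
  intro k
  induction k with
  | zero =>
    intro a c b h
    exact absurd h (Part.notMem_none _)
  | succ k ih =>
    intro a c b h
    simp only [Part.Fix.approx, ITER, bindL, Part.mem_bind_iff] at h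
    obtain ⟨p, hp, q, hq, hx⟩ := h
    simp only [seq, bindL, Part.mem_bind_iff]
    cases hs : p.2 with
    | inl b₀ =>
      rw [hs] at hq
      simp only [Sum.elim_inl, etaL, Part.mem_some_iff] at hq
      subst hq
      rw [Part.mem_some_iff] at hx
      injection hx with h1 h2
      subst h1; subst h2
      exact ⟨p, hp, _, by rw [hs]; exact Part.mem_some _, Part.mem_some _⟩
    | inr a' =>
      rw [hs] at hq
      simp only [Sum.elim_inr] at hq
      rw [Part.mem_some_iff] at hx
      injection hx with h1 h2
      subst h1; subst h2
      exact ⟨p, hp, (q.1, Sum.inl q.2), by rw [hs]; exact ih a' q.1 q.2 hq,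
        Part.mem_some _⟩

/-- Compactness of iteration: if `iter(g)(a) = step^c (η_L b)`, then there merely
exists `k : ℕ` such that `seq(g, k, a) = step^c (η_L (inl b))`. -/
theorem iter_compact {C A B : Type} [AddMonoid C] (g : A → L C (B ⊕ A))
    (a : A) (b : B) (c : C) (h : iter g a = stepL c (etaL b)) :
    ∃ k : ℕ, seq g k a = stepL c (etaL (Sum.inl b)) := by
  have hst : stepL c (etaL b) = Part.some (c + 0, b) := by
    simp [stepL, etaL]
  have hmem : (c + 0, b) ∈ iter g a := by rw [h, hst]; exact Part.mem_some _
  have hmem' : (c + 0, b) ∈ Part.fix (ITERhom g : (A → L C B) → (A → L C B)) a := hmem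
  rw [Part.Fix.mem_iff (ITERhom g)] at hmem'
  obtain ⟨k, hk⟩ := hmem'
  refine ⟨k, ?_⟩
  have := approx_to_seq g k a (c + 0) b hk
  have hst' : stepL c (etaL (Sum.inl b)) = (Part.some (c + 0, (Sum.inl b : B ⊕ A)) : L C (B ⊕ A)) := by
    simp [stepL, etaL]
  rw [hst', Part.eq_some_iff]
  exact this
end
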